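/- Let I ≥ 0, J > 0, K ≥ 0 with K·I·(e^J − 1) < J. Suppose y : [0, 1] → ℝ is continuous, nonnegative, and satisfies y(x) ≤ I + ∫_x^1 (J·y(z) + K·y(z)²) dz for every x ∈ [0, 1]. Then for every x ∈ [0, 1], y(x) ≤ I·J·e^{J(1−x)} / (J − K·I·(e^{J(1−x)} − 1)); in particular sup_{x ∈ [0,1]} y(x) ≤ I·J·e^{J} / (J − K·I·(e^{J} − 1)). -/

import Mathlib

/-!
The substitution `w = 1/u` turns the Bernoulli inequality `-u' ≤ J u + K u²` into the linear
inequality `w' ≥ -J w - K`, whose integrating factor is `e^{J(b-x)}`; hence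
`J e^{J(b-x)} / u + K e^{J(b-x)}` is antitone, and comparing it with its value at `b` gives the
explicit Bernoulli bound. The function `I + ∫_x^1 (J y + K y²)` satisfies the Bernoulli
inequality and dominates `y`; it is positive once `I` is replaced by `I + ε`, and `ε → 0`
recovers the case `I = 0`.
-/

open Set intervalIntegral Real

/-- The solution of `Y' = J Y + K Y²`, `Y(0) = I`. -/
noncomputable def bernoulliSolution (I J K τ : ℝ) : ℝ :=
  I * J * exp (J * τ) / (J - K * I * (exp (J * τ) - 1))

lemma bernoulliSolution_denom_pos {I J K τ : ℝ} (hI : 0 ≤ I) (hJ : 0 ≤ J) (hK : 0 ≤ K)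
    (hsmall : K * I * (exp J - 1) < J) (hτ : τ ≤ 1) :
    0 < J - K * I * (exp (J * τ) - 1) := by
  have : exp (J * τ) ≤ exp J := exp_le_exp.2 (mul_le_of_le_one_right hJ hτ)
  have : K * I * (exp (J * τ) - 1) ≤ K * I * (exp J - 1) := by gcongr
  linarith

lemma bernoulliSolution_monotoneOn {I J K : ℝ} (hI : 0 ≤ I) (hJ : 0 ≤ J) (hK : 0 ≤ K)
    (hsmall : K * I * (exp J - 1) < J) :
    MonotoneOn (bernoulliSolution I J K) (Iic 1) := by
  intro τ _ σ hσ hτσ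
  have hexp : exp (J * τ) ≤ exp (J * σ) := exp_le_exp.2 (by gcongr)
  apply div_le_div₀ (by positivity) (by gcongr) (bernoulliSolution_denom_pos hI hJ hK hsmall hσ)
  gcongr

theorem bernoulli_comparison_of_neg_deriv_le {a b J K x : ℝ} {u u' : ℝ → ℝ} (hJ : 0 ≤ J)
    (hcont : ContinuousOn u (Icc a b)) (hderiv : ∀ x ∈ Ioo a b, HasDerivAt u (u' x) x)
    (hpos : ∀ x ∈ Icc a b, 0 < u x) (hineq : ∀ x ∈ Ioo a b, -u' x ≤ J * u x + K * u x ^ 2)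
    (hx : x ∈ Icc a b) :
    u x * (J - K * u b * (exp (J * (b - x)) - 1)) ≤ u b * J * exp (J * (b - x)) := by
  set E : ℝ → ℝ := fun x => exp (J * (b - x))
  have hE : ∀ x, HasDerivAt E (-J * E x) x := fun x => by
    simpa [mul_comm] using (((hasDerivAt_id x).const_sub b).const_mul J).exp
  have hanti : AntitoneOn (fun x => J * E x / u x + K * E x) (Icc a b) := by
    refine antitoneOn_of_hasDerivWithinAt_nonpos (convex_Icc a b) ?_
      (fun x hx => ?_) (fun x hx => ?_)
      (f' := fun x => (J * (-J * E x) * u x - J * E x * u' x) / u x ^ 2 + K * (-J * E x))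
    · have hE_cont : Continuous E := by fun_prop
      exact ((continuous_const.mul hE_cont).continuousOn.div hcont fun x hx => (hpos x hx).ne').add
        (continuous_const.mul hE_cont).continuousOn
    · rw [interior_Icc] at hx ⊢
      exact ((((hE x).const_mul J).div (hderiv x hx) (hpos x (Ioo_subset_Icc_self hx)).ne').add
        ((hE x).const_mul K)).hasDerivWithinAt
    · rw [interior_Icc] at hx
      have hux := hpos x (Ioo_subset_Icc_self hx)
      have hEx : 0 < E x := exp_pos _
      have : (J * (-J * E x) * u x - J * E x * u' x) / u x ^ 2 + K * (-J * E x)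
          = J * E x * (-u' x - J * u x - K * u x ^ 2) / u x ^ 2 := by
        field_simp
        ring
      rw [this]
      exact div_nonpos_of_nonpos_of_nonneg
        (mul_nonpos_of_nonneg_of_nonpos (by positivity) (by linarith [hineq x hx]))
        (by positivity)
  have hb : b ∈ Icc a b := ⟨hx.1.trans hx.2, le_rfl⟩
  have hmono : J / u b + K ≤ J * E x / u x + K * E x := by
    simpa [E] using hanti hx hb hx.2
  have hub := hpos b hb
  have hux := hpos x hx
  have hscale := mul_le_mul_of_nonneg_left hmono (mul_pos hub hux).le
  have hl : u b * u x * (J / u b + K) = J * u x + K * u b * u x := by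
    field_simp
  have hr : u b * u x * (J * E x / u x + K * E x) = J * E x * u b + K * E x * u b * u x := by
    field_simp
  rw [hl, hr] at hscale
  linarith

section IntegralInequality

variable {a b c J K x : ℝ} {y : ℝ → ℝ}

theorem integral_bernoulli_comparison_of_pos (hc : 0 < c) (hJ : 0 ≤ J) (hK : 0 ≤ K)
    (hy_cont : ContinuousOn y (Icc a b)) (hy_nonneg : ∀ x ∈ Icc a b, 0 ≤ y x)
    (hy_ineq : ∀ x ∈ Icc a b, y x ≤ c + ∫ z in x..b, (J * y z + K * y z ^ 2))
    (hx : x ∈ Icc a b) :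
    (c + ∫ z in x..b, (J * y z + K * y z ^ 2)) * (J - K * c * (exp (J * (b - x)) - 1))
      ≤ c * J * exp (J * (b - x)) := by
  set g : ℝ → ℝ := fun z => J * y z + K * y z ^ 2
  set u : ℝ → ℝ := fun x => c + ∫ z in x..b, g z
  have hab : uIcc a b = Icc a b := uIcc_of_le (hx.1.trans hx.2)
  have hg_cont : ContinuousOn g (Icc a b) := by fun_prop
  have hpos : ∀ x ∈ Icc a b, 0 < u x := fun x hx => by
    have : 0 ≤ ∫ z in x..b, g z := integral_nonneg hx.2 fun z hz => by
      have := hy_nonneg z ⟨hx.1.trans hz.1, hz.2⟩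
      positivity
    exact lt_add_of_pos_of_le hc this
  have hderiv : ∀ x ∈ Ioo a b, HasDerivAt u (-g x) x := fun x hx =>
    (integral_hasDerivAt_left
      ((hg_cont.mono (Icc_subset_Icc hx.1.le le_rfl)).intervalIntegrable_of_Icc hx.2.le)
      ((hg_cont.mono Ioo_subset_Icc_self).stronglyMeasurableAtFilter isOpen_Ioo x hx)
      (hg_cont.continuousAt (Icc_mem_nhds hx.1 hx.2))).const_add c
  have hcont : ContinuousOn u (Icc a b) := by
    refine continuousOn_const.add ?_
    rw [← hab]
    exact continuousOn_primitive_interval_left (hab ▸ hg_cont.integrableOn_Icc)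
  have hineq : ∀ x ∈ Ioo a b, -(-g x) ≤ J * u x + K * u x ^ 2 := fun x hx => by
    have hx' := Ioo_subset_Icc_self hx
    have hyx := hy_nonneg x hx'
    have hyu : y x ≤ u x := hy_ineq x hx'
    rw [neg_neg]
    show J * y x + K * y x ^ 2 ≤ J * u x + K * u x ^ 2
    gcongr
  have hub : u b = c := by simp [u]
  simpa only [hub] using bernoulli_comparison_of_neg_deriv_le hJ hcont hderiv hpos hineq hx

theorem integral_bernoulli_comparison (hc : 0 ≤ c) (hJ : 0 ≤ J) (hK : 0 ≤ K)
    (hy_cont : ContinuousOn y (Icc a b)) (hy_nonneg : ∀ x ∈ Icc a b, 0 ≤ y x)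
    (hy_ineq : ∀ x ∈ Icc a b, y x ≤ c + ∫ z in x..b, (J * y z + K * y z ^ 2))
    (hx : x ∈ Icc a b) :
    (c + ∫ z in x..b, (J * y z + K * y z ^ 2)) * (J - K * c * (exp (J * (b - x)) - 1))
      ≤ c * J * exp (J * (b - x)) := by
  set F := ∫ z in x..b, (J * y z + K * y z ^ 2)
  set E := exp (J * (b - x))
  have hlim := ContinuousWithinAt.closure_le (s := Ioi 0) (x := 0)
    (f := fun ε => (c + ε + F) * (J - K * (c + ε) * (E - 1))) (g := fun ε => (c + ε) * J * E)
    (by simp) (by fun_prop) (by fun_prop) fun ε hε =>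
      integral_bernoulli_comparison_of_pos (add_pos_of_nonneg_of_pos hc hε) hJ hK hy_cont hy_nonneg
        (fun x hx => by linarith [hy_ineq x hx, mem_Ioi.1 hε]) hx
  simpa using hlim

end IntegralInequality

/-- The nonlinear comparison-lemma step used in the proof of Lemma 5.3: a nonnegative
continuous function satisfying the backward integral inequality
`y(x) ≤ I + ∫_x^1 (J y + K y²)` is dominated by the explicit solution
`I J e^{J(1−x)}/(J − K I (e^{J(1−x)} − 1))` of the Bernoulli ODE, provided
`K I (e^J − 1) < J`. -/
theorem backward_bernoulli_comparison (I J K : ℝ) (hI : 0 ≤ I) (hJ : 0 < J) (hK : 0 ≤ K)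
    (hsmall : K * I * (Real.exp J - 1) < J)
    (y : ℝ → ℝ) (hy_cont : ContinuousOn y (Icc 0 1))
    (hy_nonneg : ∀ x ∈ Icc (0:ℝ) 1, 0 ≤ y x)
    (hy_ineq : ∀ x ∈ Icc (0:ℝ) 1,
      y x ≤ I + ∫ z in x..(1:ℝ), (J * y z + K * (y z) ^ 2)) :
    (∀ x ∈ Icc (0:ℝ) 1,
      y x ≤ I * J * Real.exp (J * (1 - x)) / (J - K * I * (Real.exp (J * (1 - x)) - 1))) ∧
    (⨆ x : Icc (0:ℝ) 1, y x) ≤ I * J * Real.exp J / (J - K * I * (Real.exp J - 1)) := by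
  have hbound : ∀ x ∈ Icc (0:ℝ) 1, y x ≤ bernoulliSolution I J K (1 - x) := fun x hx =>
    calc y x ≤ I + ∫ z in x..(1:ℝ), (J * y z + K * (y z) ^ 2) := hy_ineq x hx
      _ ≤ bernoulliSolution I J K (1 - x) :=
        (le_div_iff₀ (bernoulliSolution_denom_pos hI hJ.le hK hsmall (by linarith [hx.1]))).2 <|
          integral_bernoulli_comparison hI hJ.le hK hy_cont hy_nonneg hy_ineq hx
  refine ⟨hbound, ?_⟩
  have : Nonempty (Icc (0:ℝ) 1) := ⟨⟨0, left_mem_Icc.2 zero_le_one⟩⟩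
  refine ciSup_le fun x => (hbound x x.2).trans ?_
  have hx : 1 - (x : ℝ) ≤ 1 := by linarith [x.2.1]
  simpa [bernoulliSolution] using bernoulliSolution_monotoneOn hI hJ.le hK hsmall
    (mem_Iic.2 hx) (mem_Iic.2 le_rfl) hx
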